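/- Let (X,d) be a sequentially Yoneda-complete T1 bounded quasi-metric space and let K ∈ K_0(X). Then ι(K) = (K*)⁺; that is, for any standard representation (F_n) of K, a formal ball (y,s) ∈ BX belongs to ∩_n ↑F_n if and only if s = 0 and y ∈ K. -/

import Mathlib

open scoped NNReal

/-! Generic sequence notions for an arbitrary "distance" function `ρ`. -/

def IsCauchySeq {α : Type _} (ρ : α → α → ℝ) (u : ℕ → α) : Prop :=
  ∀ ε : ℝ, 0 < ε → ∃ N, ∀ n m, N ≤ n → n ≤ m → ρ (u n) (u m) < ε

def IsBiCauchySeq {α : Type _} (ρ : α → α → ℝ) (u : ℕ → α) : Prop :=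
  ∀ ε : ℝ, 0 < ε → ∃ N, ∀ n m, N ≤ n → N ≤ m → ρ (u n) (u m) < ε

/-- `sup_{m ≥ n} ρ (u m) y`. -/
noncomputable def supTail {α : Type _} (ρ : α → α → ℝ) (u : ℕ → α) (y : α) (n : ℕ) : ℝ :=
  sSup {t | ∃ m, n ≤ m ∧ t = ρ (u m) y}

/-- `x` is a Yoneda limit of `u`:  `ρ x y = inf_n sup_{m ≥ n} ρ (u m) y` for all `y`. -/
def IsYonedaLim {α : Type _} (ρ : α → α → ℝ) (u : ℕ → α) (x : α) : Prop :=
  ∀ y, ρ x y = sInf (Set.range (supTail ρ u y))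

def SeqYonedaCompleteD {α : Type _} (ρ : α → α → ℝ) : Prop :=
  ∀ u, IsCauchySeq ρ u → ∃ x, IsYonedaLim ρ u x

/-- Smyth completeness: every Cauchy sequence converges in the symmetrized metric. -/
def SmythCompleteD {α : Type _} (ρ : α → α → ℝ) : Prop :=
  ∀ u, IsCauchySeq ρ u → ∃ x, ∀ ε : ℝ, 0 < ε → ∃ N, ∀ n, N ≤ n →
    max (ρ x (u n)) (ρ (u n) x) < ε

/-- `inf_{m ≥ n} ρ e (u m)`. -/
noncomputable def infTail {α : Type _} (ρ : α → α → ℝ) (u : ℕ → α) (e : α) (n : ℕ) : ℝ :=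
  sInf {t | ∃ m, n ≤ m ∧ t = ρ e (u m)}

/-- `e` is a finite point: for every Cauchy sequence `u` with Yoneda limit `x`,
`ρ e x = sup_n inf_{m ≥ n} ρ e (u m)`. -/
def IsFinitePoint {α : Type _} (ρ : α → α → ℝ) (e : α) : Prop :=
  ∀ u x, IsCauchySeq ρ u → IsYonedaLim ρ u x →
    ρ e x = sSup (Set.range (infTail ρ u e))

/-- ω-algebraic: a countable set of finite points such that every point is a Yoneda limit
of a Cauchy sequence of points from it. -/
def OmegaAlgebraicD {α : Type _} (ρ : α → α → ℝ) : Prop :=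
  ∃ X0 : Set α, X0.Countable ∧ (∀ e ∈ X0, IsFinitePoint ρ e) ∧
    ∀ x, ∃ u : ℕ → α, (∀ n, u n ∈ X0) ∧ IsCauchySeq ρ u ∧ IsYonedaLim ρ u x

/-- A quasi-metric on `X`. -/
structure QuasiMetric (X : Type _) : Type _ where
  d : X → X → ℝ
  nonneg : ∀ x y, 0 ≤ d x y
  triangle : ∀ x y z, d x z ≤ d x y + d y z
  eq_iff : ∀ x y, x = y ↔ d x y = 0 ∧ d y x = 0

/-- Formal balls over `X`. -/
abbrev FB (X : Type _) := X × ℝ≥0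

/-- Nonempty finite subsets of the space of formal balls. -/
def PFin (X : Type _) : Type _ := {F : Set (FB X) // F.Finite ∧ F.Nonempty}

namespace QuasiMetric

variable {X : Type _} (Q : QuasiMetric X)

def IsT1 : Prop := ∀ x y, Q.d x y = 0 → x = y

def Bounded : Prop := ∃ C : ℝ, ∀ x y, Q.d x y ≤ C

def ball (x : X) (ε : ℝ) : Set X := {y | Q.d x y < ε}

/-- The topology `τ_d` induced by the quasi-metric. -/
def tau : TopologicalSpace X :=
  TopologicalSpace.generateFrom {s | ∃ x ε, 0 < ε ∧ s = Q.ball x ε}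

def dstar (x y : X) : ℝ := max (Q.d x y) (Q.d y x)

def SeqYonedaComplete : Prop := SeqYonedaCompleteD Q.d

def SmythComplete : Prop := SmythCompleteD Q.d

/-- `K` is `d⁻¹`-precompact. -/
def dInvPrecompact (K : Set X) : Prop :=
  ∀ ε : ℝ, 0 < ε → ∃ F : Set X, F.Finite ∧ F ⊆ K ∧ ∀ k ∈ K, ∃ x ∈ F, Q.d k x < ε

/-- The nonempty compact subsets of `(X, τ_d)`. -/
def K0 : Set (Set X) := {K | K.Nonempty ∧ @IsCompact X Q.tau K}

noncomputable def dPtSet (x : X) (B : Set X) : ℝ := sInf {t | ∃ b ∈ B, t = Q.d x b}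

noncomputable def dSetPt (A : Set X) (y : X) : ℝ := sInf {t | ∃ a ∈ A, t = Q.d a y}

/-- The Hausdorff quasi-metric. -/
noncomputable def Hd (A B : Set X) : ℝ :=
  max (sSup {t | ∃ b ∈ B, t = Q.dSetPt A b}) (sSup {t | ∃ a ∈ A, t = Q.dPtSet a B})

/-- Order on formal balls: `(x,r) ⊑ (y,s)  ↔  d x y ≤ r - s`. -/
def ble (a b : FB X) : Prop := Q.d a.1 b.1 ≤ (a.2 : ℝ) - (b.2 : ℝ)

/-- Auxiliary relation: `(x,r) ≺ (y,s)  ↔  d x y < r - s`. -/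
def blt (a b : FB X) : Prop := Q.d a.1 b.1 < (a.2 : ℝ) - (b.2 : ℝ)

def iota (x : X) : FB X := (x, 0)

/-- The quasi-metric `q` on formal balls. -/
noncomputable def q (a b : FB X) : ℝ :=
  max (Q.d a.1 b.1) |(a.2 : ℝ) - (b.2 : ℝ)| + ((b.2 : ℝ) - (a.2 : ℝ))

/-- The Egli–Milner relation `≺_EM` on nonempty finite sets of formal balls. -/
def em (F G : PFin X) : Prop :=
  (∀ b ∈ G.1, ∃ a ∈ F.1, Q.blt a b) ∧ (∀ a ∈ F.1, ∃ b ∈ G.1, Q.blt a b)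

/-- The non-strict Egli–Milner relation `⊑_EM`. -/
def emLE (F G : PFin X) : Prop :=
  (∀ a ∈ F.1, ∃ b ∈ G.1, Q.ble a b) ∧ (∀ b ∈ G.1, ∃ a ∈ F.1, Q.ble a b)

/-- `rF = max { r : (x,r) ∈ F }`. -/
noncomputable def rF (F : PFin X) : ℝ := sSup {t | ∃ p ∈ F.1, t = (p.2 : ℝ)}

/-- `δ(F,G) = min {(r-s) - d x y : (x,r) ∈ F, (y,s) ∈ G, (x,r) ≺ (y,s)}`. -/
noncomputable def delta (F G : PFin X) : ℝ :=
  sInf {t | ∃ a ∈ F.1, ∃ b ∈ G.1, Q.blt a b ∧ t = ((a.2 : ℝ) - (b.2 : ℝ)) - Q.d a.1 b.1}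

/-- The Hausdorff quasi-metric `H_q` on `P_fin(BX)` induced by `q`. -/
noncomputable def Hq (F G : PFin X) : ℝ :=
  max (sSup {t | ∃ a ∈ F.1, t = sInf {s | ∃ b ∈ G.1, s = Q.q a b}})
      (sSup {t | ∃ b ∈ G.1, t = sInf {s | ∃ a ∈ F.1, s = Q.q a b}})

/-- ω-chains in `(P_fin(BX), ≺_EM)`; `c n` plays the role of `F_{n+1}`. -/
def Chain : Type _ := {c : ℕ → PFin X // ∀ n, Q.em (c n) (c (n + 1))}

def chainLE (c c' : Q.Chain) : Prop := ∀ n, ∃ m, Q.em (c.1 n) (c'.1 m)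

def chainEquiv (c c' : Q.Chain) : Prop := Q.chainLE c c' ∧ Q.chainLE c' c

lemma blt_trans {a b c : FB X} (h1 : Q.blt a b) (h2 : Q.blt b c) : Q.blt a c := by
  have h3 := Q.triangle a.1 b.1 c.1
  unfold blt at h1 h2 ⊢
  linarith

lemma em_trans {F G H : PFin X} (h1 : Q.em F G) (h2 : Q.em G H) : Q.em F H := by
  constructor
  · intro b hb
    obtain ⟨a, ha, hab⟩ := h2.1 b hb
    obtain ⟨a', ha', h'⟩ := h1.1 a ha
    exact ⟨a', ha', Q.blt_trans h' hab⟩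
  · intro a ha
    obtain ⟨b, hb, hab⟩ := h1.2 a ha
    obtain ⟨c, hc, hbc⟩ := h2.2 b hb
    exact ⟨c, hc, Q.blt_trans hab hbc⟩

lemma chainLE_refl (c : Q.Chain) : Q.chainLE c c := fun n => ⟨n + 1, c.2 n⟩

lemma chainLE_trans {a b c : Q.Chain} (h1 : Q.chainLE a b) (h2 : Q.chainLE b c) :
    Q.chainLE a c := by
  intro n
  obtain ⟨m, hm⟩ := h1 n
  obtain ⟨k, hk⟩ := h2 m
  exact ⟨k, Q.em_trans hm hk⟩

def chainSetoid : Setoid Q.Chain where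
  r := Q.chainEquiv
  iseqv := ⟨fun c => ⟨Q.chainLE_refl c, Q.chainLE_refl c⟩,
    fun h => ⟨h.2, h.1⟩,
    fun h1 h2 => ⟨Q.chainLE_trans h1.1 h2.1, Q.chainLE_trans h2.2 h1.2⟩⟩

/-- The ω-Plotkin domain `CBX`: equivalence classes of ω-chains in `(P_fin(BX), ≺_EM)`. -/
def CBX : Type _ := Quotient Q.chainSetoid

/-- The partial order of `CBX`. -/
def cbLE : Q.CBX → Q.CBX → Prop :=
  Quotient.lift₂ Q.chainLE (by
    intro a b a' b' ha hb
    have ha' : Q.chainEquiv a a' := ha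
    have hb' : Q.chainEquiv b b' := hb
    exact propext ⟨fun h => Q.chainLE_trans (Q.chainLE_trans ha'.2 h) hb'.1,
      fun h => Q.chainLE_trans (Q.chainLE_trans ha'.1 h) hb'.2⟩)

def chainWB (c c' : Q.Chain) : Prop := ∃ m, ∀ n, Q.em (c.1 n) (c'.1 m)

/-- The way-below relation of `CBX`. -/
def cbWB : Q.CBX → Q.CBX → Prop :=
  Quotient.lift₂ Q.chainWB (by
    intro a b a' b' ha hb
    have ha' : Q.chainEquiv a a' := ha
    have hb' : Q.chainEquiv b b' := hb
    apply propext
    constructor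
    · rintro ⟨m, hm⟩
      obtain ⟨k, hk⟩ := hb'.1 m
      refine ⟨k, fun n => ?_⟩
      obtain ⟨p, hp⟩ := ha'.2 n
      exact Q.em_trans hp (Q.em_trans (hm p) hk)
    · rintro ⟨m, hm⟩
      obtain ⟨k, hk⟩ := hb'.2 m
      refine ⟨k, fun n => ?_⟩
      obtain ⟨p, hp⟩ := ha'.1 n
      exact Q.em_trans hp (Q.em_trans (hm p) hk))

/-- The Scott topology of `CBX`, generated by the sets `↟I`. -/
def scottTop : TopologicalSpace Q.CBX :=
  TopologicalSpace.generateFrom {s | ∃ I : Q.CBX, s = {J | Q.cbWB I J}}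

def upSet (F : PFin X) : Set (FB X) := {b | ∃ a ∈ F.1, Q.ble a b}

/-- `I⁺ = ⋂_n ↑F_n` for a representing chain. -/
def Iplus (c : Q.Chain) : Set (FB X) := ⋂ n, Q.upSet (c.1 n)

noncomputable def IplusQ (I : Q.CBX) : Set (FB X) := Q.Iplus (Quotient.out I)

/-- `r̄ I = inf { rF : F occurs in some chain representing I }`. -/
noncomputable def rbar (I : Q.CBX) : ℝ :=
  sInf {t | ∃ c : Q.Chain, Quotient.mk Q.chainSetoid c = I ∧ ∃ n, t = rF (c.1 n)}

/-- `c` is a standard representation of `K`: `c n` (playing the role of `F_{n+1}`) is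
`{(x_i^j, 1/(n+1)) : 1 ≤ j ≤ n+1, 1 ≤ i ≤ m_j}` where the `x_i^j ∈ K` satisfy
`∀ y ∈ K, ∃ i, d (x_i^j) y < 1/(2 j²)`. -/
def IsStdRep (K : Set X) (c : Q.Chain) : Prop :=
  ∃ (m : ℕ → ℕ) (x : ℕ → ℕ → X),
    (∀ j i, 1 ≤ j → 1 ≤ i → i ≤ m j → x j i ∈ K) ∧
    (∀ j, 1 ≤ j → ∀ y ∈ K, ∃ i, 1 ≤ i ∧ i ≤ m j ∧ Q.d (x j i) y < 1 / (2 * (j : ℝ) ^ 2)) ∧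
    (∀ n : ℕ, (c.1 n).1 =
      {p : FB X | ∃ j i, 1 ≤ j ∧ j ≤ n + 1 ∧ 1 ≤ i ∧ i ≤ m j ∧
        p = (x j i, ((n : ℝ≥0) + 1)⁻¹)})

/-- `D` on representing chains: `sup_n inf_m H_q(F_n, G_m)`. -/
noncomputable def Dchain (c c' : Q.Chain) : ℝ :=
  sSup {t | ∃ n, t = sInf {s | ∃ m, s = Q.Hq (c.1 n) (c'.1 m)}}

/-- The quasi-metric `D` on `CBX`. -/
noncomputable def D (I J : Q.CBX) : ℝ := Q.Dchain (Quotient.out I) (Quotient.out J)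

/-- The topology induced by `D` on `CBX`. -/
def DTop : TopologicalSpace Q.CBX :=
  TopologicalSpace.generateFrom
    {s | ∃ (I : Q.CBX) (ε : ℝ), 0 < ε ∧ s = {J | Q.D I J < ε}}

/-- The hyperspace `K_0(X)` as a type. -/
def K0T : Type _ := {K : Set X // K.Nonempty ∧ @IsCompact X Q.tau K}

/-- The Vietoris topology on `K_0(X)`. -/
def vietoris : TopologicalSpace Q.K0T :=
  TopologicalSpace.generateFrom
    ({s | ∃ V : Set X, @IsOpen X Q.tau V ∧ s = {K : Q.K0T | (K.1 ∩ V).Nonempty}} ∪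
     {s | ∃ V : Set X, @IsOpen X Q.tau V ∧ s = {K : Q.K0T | K.1 ⊆ V}})

/-- The topology of the Hausdorff quasi-metric on `K_0(X)`. -/
def hdTop : TopologicalSpace Q.K0T :=
  TopologicalSpace.generateFrom
    {s | ∃ (K : Q.K0T) (ε : ℝ), 0 < ε ∧ s = {L : Q.K0T | Q.Hd K.1 L.1 < ε}}

/-- Round ideals of `(P_fin(BX), ≺_EM)`. -/
def IsRoundIdeal (I : Set (PFin X)) : Prop :=
  I.Nonempty ∧ (∀ F G : PFin X, Q.em F G → G ∈ I → F ∈ I) ∧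
  (∀ F ∈ I, ∀ G ∈ I, ∃ H ∈ I, Q.em F H ∧ Q.em G H)

end QuasiMetric


/-! If `(y, s)` lies above every `F_n`, then `F_n` contains a ball `(z, 1/n)` with `z ∈ K` and
`d z y ≤ 1/n - s`; hence `s = 0` and points of `K` approach `y` from the left. A cluster point
`z ∈ K` of these points then has `d z y = 0`, so `z = y` by T1. Conversely, the `1/(2j²)`-nets
chosen in `F_n` put `(y, 0)` above every `F_n` when `y ∈ K`. -/

namespace QuasiMetric

variable {X : Type*}

lemma d_self (Q : QuasiMetric X) (x : X) : Q.d x x = 0 :=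
  ((Q.eq_iff x x).mp rfl).1

lemma ball_mem_nhds (Q : QuasiMetric X) (x : X) {ε : ℝ} (hε : 0 < ε) :
    Q.ball x ε ∈ @nhds X Q.tau x :=
  @IsOpen.mem_nhds X Q.tau _ _ (TopologicalSpace.GenerateOpen.basic _ ⟨x, ε, hε, rfl⟩)
    (by simpa [ball, Q.d_self] using hε)

lemma exists_mem_d_eq_zero_of_isCompact (Q : QuasiMetric X) {K : Set X}
    (hK : @IsCompact X Q.tau K) {y : X} (hy : ∀ ε > 0, ∃ z ∈ K, Q.d z y < ε) :
    ∃ z ∈ K, Q.d z y = 0 := by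
  let := Q.tau
  choose k hkK hky using fun n : ℕ => hy (1 / (n + 1)) Nat.one_div_pos_of_nat
  obtain ⟨z, hzK, hz⟩ := hK.exists_clusterPt (f := Filter.map k Filter.atTop) <|
    Filter.tendsto_principal.mpr <| Filter.Eventually.of_forall hkK
  refine ⟨z, hzK, le_antisymm (le_of_forall_pos_lt_add fun ε hε => ?_) (Q.nonneg z y)⟩
  have hε2 : 0 < ε / 2 := half_pos hε
  obtain ⟨N, hN⟩ := exists_nat_one_div_lt hε2
  have hclose : ∀ᶠ n in Filter.atTop, Q.d (k n) y < ε / 2 :=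
    Filter.eventually_atTop.mpr ⟨N, fun n hn => (hky n).trans_le <|
      le_of_lt <| lt_of_le_of_lt (Nat.one_div_le_one_div hn) hN⟩
  obtain ⟨n, hzn, hny⟩ := ((MapClusterPt.frequently hz (Q.ball_mem_nhds z hε2)).and_eventually
    hclose).exists
  calc Q.d z y ≤ Q.d z (k n) + Q.d (k n) y := Q.triangle _ _ _
    _ < 0 + ε := by
      have : Q.d z (k n) < ε / 2 := hzn
      linarith

namespace IsStdRep

variable {Q : QuasiMetric X} {K : Set X} {c : Q.Chain}

lemma exists_d_add_le_of_mem_upSet (hc : Q.IsStdRep K c) {n : ℕ} {b : FB X}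
    (hb : b ∈ Q.upSet (c.1 n)) : ∃ z ∈ K, Q.d z b.1 + b.2 ≤ ((n : ℝ) + 1)⁻¹ := by
  obtain ⟨m, x, hxK, -, hset⟩ := hc
  obtain ⟨a, ha, hab⟩ := hb
  rw [hset n] at ha
  obtain ⟨j, i, hj, -, hi, him, rfl⟩ := ha
  refine ⟨x j i, hxK j i hj hi him, ?_⟩
  have : Q.d (x j i) b.1 ≤ ((n : ℝ) + 1)⁻¹ - b.2 := by simpa [ble] using hab
  linarith

lemma iota_mem_upSet (hc : Q.IsStdRep K c) {y : X} (hy : y ∈ K) (n : ℕ) :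
    iota y ∈ Q.upSet (c.1 n) := by
  obtain ⟨m, x, -, hnet, hset⟩ := hc
  obtain ⟨i, hi, him, hd⟩ := hnet (n + 1) n.succ_pos y hy
  have hmem : (x (n + 1) i, ((n : ℝ≥0) + 1)⁻¹) ∈ (c.1 n).1 := by
    rw [hset n]
    exact ⟨n + 1, i, n.succ_pos, le_rfl, hi, him, rfl⟩
  refine ⟨_, hmem, ?_⟩
  have hn : (1 : ℝ) ≤ n + 1 := by linarith [n.cast_nonneg (α := ℝ)]
  have : 1 / (2 * ((n : ℝ) + 1) ^ 2) ≤ ((n : ℝ) + 1)⁻¹ := by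
    rw [one_div]; exact inv_anti₀ (by positivity) (by nlinarith)
  push_cast [ble, iota] at hd ⊢
  linarith

end IsStdRep

end QuasiMetric

theorem stmt4_general {X : Type} (Q : QuasiMetric X) (hT1 : Q.IsT1)
    (K : Set X) (hK : K ∈ Q.K0) (c : Q.Chain)
    (hc : Q.IsStdRep K c) :
    ∀ b : FB X, b ∈ Q.Iplus c ↔ (b.2 = 0 ∧ b.1 ∈ K) := by
  rintro ⟨y, s⟩
  constructor
  · intro hb
    have hball n := hc.exists_d_add_le_of_mem_upSet (Set.mem_iInter.mp hb n)
    have hs : s = 0 := NNReal.coe_eq_zero.mp <| le_antisymm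
      (ge_of_tendsto' tendsto_one_div_add_atTop_nhds_zero_nat fun n => by
        obtain ⟨z, -, hz⟩ := hball n
        rw [one_div]
        linarith [Q.nonneg z y])
      s.coe_nonneg
    obtain ⟨z, hzK, hz⟩ := Q.exists_mem_d_eq_zero_of_isCompact hK.2 fun ε hε => by
      obtain ⟨n, hn⟩ := exists_nat_one_div_lt hε
      obtain ⟨z, hzK, hz⟩ := hball n
      rw [hs, NNReal.coe_zero, add_zero] at hz
      rw [one_div] at hn
      exact ⟨z, hzK, hz.trans_lt hn⟩
    exact ⟨hs, hT1 z y hz ▸ hzK⟩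
  · rintro ⟨rfl, hy⟩
    exact Set.mem_iInter.mpr (hc.iota_mem_upSet hy)

/-- `ι(K) = (K*)⁺`, i.e. for any standard representation `(F_n)` of `K`,
`(y,s) ∈ ⋂_n ↑F_n` iff `s = 0` and `y ∈ K`. -/
theorem stmt4 {X : Type} (Q : QuasiMetric X) (hT1 : Q.IsT1) (hB : Q.Bounded)
    (hY : Q.SeqYonedaComplete) (K : Set X) (hK : K ∈ Q.K0) (c : Q.Chain)
    (hc : Q.IsStdRep K c) :
    ∀ b : FB X, b ∈ Q.Iplus c ↔ (b.2 = 0 ∧ b.1 ∈ K) :=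
  stmt4_general Q hT1 K hK c hc
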